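/- Let * be a continuous t-norm, T an algebra of truth values for *, and L = Taut(T,*) the real-valued logic induced by (T,*). Then L satisfies principle P1 if and only if L extends Gödel logic, i.e. Taut([0,1],min) ⊆ L. -/

import Mathlib

open Set

noncomputable section

/-- The real unit interval `[0,1]` as a subset of `ℝ`. -/
def I01 : Set ℝ := Set.Icc 0 1

/-- A continuous t-norm on `[0,1]`. -/
structure ContTNorm where
  mul : ℝ → ℝ → ℝ
  maps_to : ∀ x ∈ I01, ∀ y ∈ I01, mul x y ∈ I01
  continuousOn : ContinuousOn (fun p : ℝ × ℝ => mul p.1 p.2) (I01 ×ˢ I01)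
  assoc : ∀ x ∈ I01, ∀ y ∈ I01, ∀ z ∈ I01, mul (mul x y) z = mul x (mul y z)
  comm : ∀ x ∈ I01, ∀ y ∈ I01, mul x y = mul y x
  mono : ∀ a ∈ I01, ∀ b ∈ I01, ∀ c ∈ I01, b ≤ c → mul a b ≤ mul a c
  one_mul' : ∀ x ∈ I01, mul 1 x = x

/-- The residuum of a t-norm: `x →* y := sup { c ∈ [0,1] | x * c ≤ y }`. -/
def resid (t : ContTNorm) (x y : ℝ) : ℝ :=
  sSup {c | c ∈ I01 ∧ t.mul x c ≤ y}

/-- An algebra of truth values for the t-norm `t`: a subset of `[0,1]` containing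
`0` and `1` and closed under `t.mul` and its residuum. -/
structure TruthAlg (t : ContTNorm) where
  carrier : Set ℝ
  subset : carrier ⊆ I01
  zero_mem : (0:ℝ) ∈ carrier
  one_mem : (1:ℝ) ∈ carrier
  mul_mem : ∀ x ∈ carrier, ∀ y ∈ carrier, t.mul x y ∈ carrier
  resid_mem : ∀ x ∈ carrier, ∀ y ∈ carrier, resid t x y ∈ carrier

/-- Propositional formulas over countably many variables with `&`, `→`, `⊥`. -/
inductive Formula : Type
  | var : ℕ → Formula
  | bot : Formula
  | conj : Formula → Formula → Formula
  | impl : Formula → Formula → Formula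

/-- `α ↔ β := (α → β) & (β → α)`. -/
def Formula.iff (a b : Formula) : Formula := .conj (.impl a b) (.impl b a)

/-- The valuation determined by an assignment `v` of reals to the variables. -/
def eval (t : ContTNorm) (v : ℕ → ℝ) : Formula → ℝ
  | .var i => v i
  | .bot => 0
  | .conj a b => t.mul (eval t v a) (eval t v b)
  | .impl a b => resid t (eval t v a) (eval t v b)

/-- A valuation into `(T, t)` is (identified with) an assignment of values of `T`
to the propositional variables. -/
def IsValuation (t : ContTNorm) (T : TruthAlg t) (v : ℕ → ℝ) : Prop :=
  ∀ i, v i ∈ T.carrier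

/-- The logic induced by `(T, t)`: all formulas true to degree 1 under every valuation. -/
def Taut (t : ContTNorm) (T : TruthAlg t) : Set Formula :=
  {α | ∀ v : ℕ → ℝ, IsValuation t T v → eval t v α = 1}

/-- Principle P1. -/
def P1 (L : Set Formula) : Prop :=
  ∀ (t : ContTNorm) (T : TruthAlg t), Taut t T = L →
    ∀ α β : Formula,
      (Formula.iff α β ∈ L ↔
        ∀ v : ℕ → ℝ, IsValuation t T v → (eval t v α = 1 ↔ eval t v β = 1))

/-- Principle P2. -/
def P2 (L : Set Formula) : Prop :=
  ∀ (t : ContTNorm) (T : TruthAlg t), Taut t T = L →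
    ∀ v w : ℕ → ℝ, IsValuation t T v → IsValuation t T w → v ≠ w →
      ∃ α : Formula, 0 < eval t v α ∧ eval t w α = 0

/-- The Gödel t-norm: minimum. -/
def minT : ContTNorm where
  mul := fun x y => min x y
  maps_to := by
    rintro x ⟨hx0, hx1⟩ y ⟨hy0, hy1⟩
    exact ⟨le_min hx0 hy0, min_le_of_left_le hx1⟩
  continuousOn := (continuous_fst.min continuous_snd).continuousOn
  assoc := fun x _ y _ z _ => min_assoc x y z
  comm := fun x _ y _ => min_comm x y
  mono := fun a _ b _ c _ h => min_le_min le_rfl h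
  one_mul' := by rintro x ⟨hx0, hx1⟩; exact min_eq_right hx1

/-- The Łukasiewicz t-norm: `x ⊙ y = max 0 (x + y - 1)`. -/
def lukT : ContTNorm where
  mul := fun x y => max 0 (x + y - 1)
  maps_to := by
    rintro x ⟨hx0, hx1⟩ y ⟨hy0, hy1⟩
    exact ⟨le_max_left _ _, max_le zero_le_one (by linarith)⟩
  continuousOn :=
    (continuous_const.max ((continuous_fst.add continuous_snd).sub continuous_const)).continuousOn
  assoc := by
    rintro x ⟨hx0, hx1⟩ y ⟨hy0, hy1⟩ z ⟨hz0, hz1⟩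
    simp only [max_def]
    split_ifs <;> linarith
  comm := by intro x _ y _; rw [add_comm]
  mono := by
    rintro a _ b _ c _ h
    exact max_le_max le_rfl (by linarith)
  one_mul' := by
    rintro x ⟨hx0, hx1⟩
    rw [show (1:ℝ) + x - 1 = x by ring, max_eq_right hx0]

/-- The product t-norm: ordinary multiplication. -/
def prodT : ContTNorm where
  mul := fun x y => x * y
  maps_to := by
    rintro x ⟨hx0, hx1⟩ y ⟨hy0, hy1⟩
    exact ⟨mul_nonneg hx0 hy0, by nlinarith⟩
  continuousOn := (continuous_fst.mul continuous_snd).continuousOn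
  assoc := fun x _ y _ z _ => mul_assoc x y z
  comm := fun x _ y _ => mul_comm x y
  mono := by rintro a ⟨ha0, _⟩ b _ c _ h; exact mul_le_mul_of_nonneg_left h ha0
  one_mul' := fun x _ => one_mul x

lemma ContTNorm.mul_zero' (t : ContTNorm) {x : ℝ} (hx : x ∈ I01) : t.mul x 0 = 0 := by
  have h01 : (0:ℝ) ∈ I01 := ⟨le_rfl, zero_le_one⟩
  have h11 : (1:ℝ) ∈ I01 := ⟨zero_le_one, le_rfl⟩
  have h1 : t.mul x 0 = t.mul 0 x := t.comm x hx 0 h01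
  have h2 : t.mul 0 x ≤ t.mul 0 1 := t.mono 0 h01 x hx 1 h11 hx.2
  have h3 : t.mul 0 1 = t.mul 1 0 := t.comm 0 h01 1 h11
  have h4 : t.mul 1 0 = 0 := t.one_mul' 0 h01
  have h5 : t.mul x 0 ∈ I01 := t.maps_to x hx 0 h01
  rw [h3, h4] at h2
  rw [h1] at h5 ⊢
  exact le_antisymm h2 h5.1

lemma resid_mem_I01 (t : ContTNorm) {x y : ℝ} (hx : x ∈ I01) (hy : y ∈ I01) :
    resid t x y ∈ I01 := by
  have h01 : (0:ℝ) ∈ I01 := ⟨le_rfl, zero_le_one⟩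
  have h0 : (0:ℝ) ∈ {c | c ∈ I01 ∧ t.mul x c ≤ y} :=
    ⟨h01, by rw [t.mul_zero' hx]; exact hy.1⟩
  have hbdd : BddAbove {c | c ∈ I01 ∧ t.mul x c ≤ y} := ⟨1, fun c hc => hc.1.2⟩
  constructor
  · exact le_csSup hbdd h0
  · exact csSup_le ⟨0, h0⟩ fun c hc => hc.1.2

/-- The full algebra of truth values `[0,1]` for a t-norm `t`. -/
def fullAlg (t : ContTNorm) : TruthAlg t where
  carrier := I01
  subset := le_rfl
  zero_mem := ⟨le_rfl, zero_le_one⟩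
  one_mem := ⟨zero_le_one, le_rfl⟩
  mul_mem := t.maps_to
  resid_mem := fun _ hx _ hy => resid_mem_I01 t hx hy

lemma resid_eq_one_of_le (t : ContTNorm) {x y : ℝ} (hx : x ∈ I01) (hy : y ∈ I01)
    (hxy : x ≤ y) : resid t x y = 1 := by
  have h11 : (1:ℝ) ∈ I01 := ⟨zero_le_one, le_rfl⟩
  have hmul : t.mul x 1 = x := by rw [t.comm x hx 1 h11]; exact t.one_mul' x hx
  have h1 : (1:ℝ) ∈ {c | c ∈ I01 ∧ t.mul x c ≤ y} := ⟨h11, by rw [hmul]; exact hxy⟩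
  have hbdd : BddAbove {c | c ∈ I01 ∧ t.mul x c ≤ y} := ⟨1, fun c hc => hc.1.2⟩
  exact le_antisymm (csSup_le ⟨1, h1⟩ fun c hc => hc.1.2) (le_csSup hbdd h1)

lemma resid_one_zero (t : ContTNorm) : resid t 1 0 = 0 := by
  have : {c | c ∈ I01 ∧ t.mul 1 c ≤ 0} = {0} := by
    ext c
    constructor
    · rintro ⟨hc, hle⟩
      have := t.one_mul' c hc
      have := hc.1
      simp only [Set.mem_singleton_iff]
      linarith [this, (t.one_mul' c hc) ▸ hle]
    · rintro rfl
      exact ⟨⟨le_rfl, zero_le_one⟩, by rw [t.mul_zero' ⟨zero_le_one, le_rfl⟩]⟩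
  rw [resid, this, csSup_singleton]

/-- The two-element algebra of truth values `{0,1}`. -/
def boolAlg (t : ContTNorm) : TruthAlg t where
  carrier := {0, 1}
  subset := by
    rintro x (rfl | rfl)
    · exact ⟨le_rfl, zero_le_one⟩
    · exact ⟨zero_le_one, le_rfl⟩
  zero_mem := Or.inl rfl
  one_mem := Or.inr rfl
  mul_mem := by
    have h01 : (0:ℝ) ∈ I01 := ⟨le_rfl, zero_le_one⟩
    have h11 : (1:ℝ) ∈ I01 := ⟨zero_le_one, le_rfl⟩
    rintro x (rfl | rfl) y (rfl | rfl)
    · exact Or.inl (t.mul_zero' h01)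
    · exact Or.inl (by rw [t.comm 0 h01 1 h11]; exact t.mul_zero' h11)
    · exact Or.inl (t.mul_zero' h11)
    · exact Or.inr (t.one_mul' 1 h11)
  resid_mem := by
    have h01 : (0:ℝ) ∈ I01 := ⟨le_rfl, zero_le_one⟩
    have h11 : (1:ℝ) ∈ I01 := ⟨zero_le_one, le_rfl⟩
    rintro x (rfl | rfl) y (rfl | rfl)
    · exact Or.inr (resid_eq_one_of_le t h01 h01 le_rfl)
    · exact Or.inr (resid_eq_one_of_le t h01 h11 zero_le_one)
    · exact Or.inl (resid_one_zero t)
    · exact Or.inr (resid_eq_one_of_le t h11 h11 le_rfl)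

/-- Classical logic: the logic induced by the two-element algebra `{0,1}`
(this is independent of the chosen continuous t-norm). -/
def ClassicalLogic : Set Formula := Taut minT (boolAlg minT)


/-!
Applied to `X₀` and `X₀ & X₀`, P1 says that `X₀ ↔ X₀ & X₀` is valid, i.e. every truth value
is idempotent. On an idempotent `x` a continuous t-norm agrees with `min` (intermediate value
theorem), so its residuum is Gödel implication and `L` contains Gödel logic. Conversely, Gödel
logic contains `X₀ ↔ X₀ & X₀`, so every algebra inducing such an `L` is evaluated as in Gödel
logic. There `α ↔ β` is valid iff `α` and `β` always take the same value; and if some valuation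
gives `α` a value below `b`, the value of `β`, then composing it with the Gödel endomorphism that
collapses `[b, 1]` to `1` makes `β` true but not `α`.
-/

namespace ContTNorm

variable (t : ContTNorm) {x y : ℝ}

lemma mul_one' (hx : x ∈ I01) : t.mul x 1 = x := by
  rw [t.comm x hx 1 ⟨zero_le_one, le_rfl⟩, t.one_mul' x hx]

lemma mul_le_left (hx : x ∈ I01) (hy : y ∈ I01) : t.mul x y ≤ x := by
  simpa only [t.mul_one' hx] using t.mono x hx y hy 1 ⟨zero_le_one, le_rfl⟩ hy.2

lemma mul_le_right (hx : x ∈ I01) (hy : y ∈ I01) : t.mul x y ≤ y := by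
  rw [t.comm x hx y hy]
  exact t.mul_le_left hy hx

lemma mul_eq_one_iff (hx : x ∈ I01) (hy : y ∈ I01) : t.mul x y = 1 ↔ x = 1 ∧ y = 1 := by
  refine ⟨fun h => ⟨?_, ?_⟩, fun ⟨hx1, hy1⟩ => ?_⟩
  · exact le_antisymm hx.2 (h ▸ t.mul_le_left hx hy)
  · exact le_antisymm hy.2 (h ▸ t.mul_le_right hx hy)
  · rw [hx1, hy1, t.mul_one' ⟨zero_le_one, le_rfl⟩]

lemma continuousOn_mul_left (hx : x ∈ I01) : ContinuousOn (t.mul x) I01 :=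
  t.continuousOn.comp (Continuous.continuousOn (by fun_prop)) fun _ hc => mk_mem_prod hx hc

/-- By the intermediate value theorem every `y ≤ x` is of the form `x * z`, and
then `x * y = (x * x) * z = x * z = y`. -/
lemma mul_eq_min_of_idem (hx : x ∈ I01) (hy : y ∈ I01) (hidem : t.mul x x = x) :
    t.mul x y = min x y := by
  rcases le_total y x with hyx | hxy
  · obtain ⟨z, hz, hzy⟩ : y ∈ t.mul x '' Icc 0 1 := by
      refine intermediate_value_Icc zero_le_one (t.continuousOn_mul_left hx) ?_
      rw [t.mul_zero' hx, t.mul_one' hx]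
      exact ⟨hy.1, hyx⟩
    calc t.mul x y = t.mul (t.mul x x) z := by rw [← hzy, t.assoc x hx x hx z hz]
      _ = min x y := by rw [hidem, hzy, min_eq_right hyx]
  · refine le_antisymm (le_min (t.mul_le_left hx hy) (t.mul_le_right hx hy)) ?_
    simpa only [min_eq_left hxy, hidem] using t.mono x hx x hx y hy hxy

end ContTNorm

section Residuum

variable (t : ContTNorm) {x y : ℝ}

/-- The set defining the residuum is closed, so its supremum is attained. -/
lemma mul_resid_le (hx : x ∈ I01) (hy : y ∈ I01) : t.mul x (resid t x y) ≤ y := by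
  have hclosed : IsClosed {c | c ∈ I01 ∧ t.mul x c ≤ y} :=
    (t.continuousOn_mul_left hx).preimage_isClosed_of_isClosed isClosed_Icc isClosed_Iic
  have hmem := hclosed.csSup_mem ⟨0, ⟨le_rfl, zero_le_one⟩, by rw [t.mul_zero' hx]; exact hy.1⟩
    ⟨1, fun _ hc => hc.1.2⟩
  exact hmem.2

lemma resid_eq_one_iff (hx : x ∈ I01) (hy : y ∈ I01) : resid t x y = 1 ↔ x ≤ y := by
  refine ⟨fun h => ?_, resid_eq_one_of_le t hx hy⟩
  simpa only [h, t.mul_one' hx] using mul_resid_le t hx hy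

lemma mul_resid_resid_eq_one_iff (hx : x ∈ I01) (hy : y ∈ I01) :
    t.mul (resid t x y) (resid t y x) = 1 ↔ x = y := by
  rw [t.mul_eq_one_iff (resid_mem_I01 t hx hy) (resid_mem_I01 t hy hx),
    resid_eq_one_iff t hx hy, resid_eq_one_iff t hy hx, le_antisymm_iff]

lemma resid_eq_resid_minT_of_idem (hx : x ∈ I01) (hidem : t.mul x x = x) :
    resid t x y = resid minT x y := by
  unfold resid
  congr 1
  ext c
  exact and_congr_right fun hc => by rw [t.mul_eq_min_of_idem hx hc hidem]; rfl

lemma resid_minT (hx : x ∈ I01) (hy : y ∈ I01) :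
    resid minT x y = if x ≤ y then 1 else y := by
  split_ifs with hxy
  · exact resid_eq_one_of_le minT hx hy hxy
  · have hset : {c | c ∈ I01 ∧ minT.mul x c ≤ y} = Icc 0 y := by
      ext c
      simp only [minT, I01, mem_ofPred_eq, mem_Icc, min_le_iff, not_le.1 hxy |>.not_ge, false_or]
      constructor
      · exact fun h => ⟨h.1.1, h.2⟩
      · exact fun h => ⟨⟨h.1, h.2.trans hy.2⟩, h.2⟩
    rw [resid, hset, csSup_Icc hy.1]

end Residuum

section Evaluation

variable {t : ContTNorm} {T : TruthAlg t} {v : ℕ → ℝ}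

lemma eval_mem (hv : IsValuation t T v) : ∀ γ : Formula, eval t v γ ∈ T.carrier
  | .var i => hv i
  | .bot => T.zero_mem
  | .conj a b => T.mul_mem _ (eval_mem hv a) _ (eval_mem hv b)
  | .impl a b => T.resid_mem _ (eval_mem hv a) _ (eval_mem hv b)

lemma iff_mem_taut_iff {α β : Formula} :
    α.iff β ∈ Taut t T ↔ ∀ v, IsValuation t T v → eval t v α = eval t v β :=
  forall₂_congr fun _ hv =>
    mul_resid_resid_eq_one_iff t (T.subset (eval_mem hv α)) (T.subset (eval_mem hv β))

def Formula.idem : Formula := Formula.iff (.var 0) (.conj (.var 0) (.var 0))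

lemma idem_mem_taut_iff : Formula.idem ∈ Taut t T ↔ ∀ x ∈ T.carrier, t.mul x x = x := by
  rw [Formula.idem, iff_mem_taut_iff]
  exact ⟨fun h x hx => (h (fun _ => x) fun _ => hx).symm, fun h v hv => (h _ (hv 0)).symm⟩

lemma eval_eq_eval_minT_of_idem (hidem : ∀ x ∈ T.carrier, t.mul x x = x)
    (hv : IsValuation t T v) (γ : Formula) : eval t v γ = eval minT v γ := by
  induction γ with
  | var i => rfl
  | bot => rfl
  | conj a b iha ihb =>
    rw [eval, eval, ← iha, ← ihb]
    exact t.mul_eq_min_of_idem (T.subset (eval_mem hv a)) (T.subset (eval_mem hv b))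
      (hidem _ (eval_mem hv a))
  | impl a b iha ihb =>
    rw [eval, eval, ← iha, ← ihb]
    exact resid_eq_resid_minT_of_idem t (T.subset (eval_mem hv a)) (hidem _ (eval_mem hv a))

lemma taut_minT_subset_of_idem (hidem : ∀ x ∈ T.carrier, t.mul x x = x) :
    Taut minT (fullAlg minT) ⊆ Taut t T := fun γ hγ v hv =>
  (eval_eq_eval_minT_of_idem hidem hv γ).trans (hγ v fun i => T.subset (hv i))

end Evaluation

section Collapse

def collapse (b z : ℝ) : ℝ := if b ≤ z then 1 else z

variable {t : ContTNorm} {b : ℝ}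

lemma collapse_mem (T : TruthAlg t) {z : ℝ} (hz : z ∈ T.carrier) : collapse b z ∈ T.carrier := by
  unfold collapse
  split_ifs
  exacts [T.one_mem, hz]

lemma collapse_min (hb : b ≤ 1) (x y : ℝ) :
    min (collapse b x) (collapse b y) = collapse b (min x y) := by
  unfold collapse
  split_ifs <;> grind

lemma collapse_godel_imp (hb : b ≤ 1) (x y : ℝ) :
    (if collapse b x ≤ collapse b y then 1 else collapse b y) =
      collapse b (if x ≤ y then 1 else y) := by
  unfold collapse
  split_ifs <;> grind

lemma eval_minT_collapse (hb0 : 0 < b) (hb1 : b ≤ 1) {v : ℕ → ℝ} (hv : ∀ i, v i ∈ I01)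
    (γ : Formula) : eval minT (fun i => collapse b (v i)) γ = collapse b (eval minT v γ) := by
  induction γ with
  | var i => rfl
  | bot => exact (if_neg hb0.not_ge).symm
  | conj a c iha ihc =>
    rw [eval, eval, iha, ihc]
    exact collapse_min hb1 _ _
  | impl a c iha ihc =>
    have ha := eval_mem (T := fullAlg minT) hv a
    have hc := eval_mem (T := fullAlg minT) hv c
    rw [eval, eval, iha, ihc, resid_minT ha hc,
      resid_minT (collapse_mem (fullAlg minT) ha) (collapse_mem (fullAlg minT) hc)]
    exact collapse_godel_imp hb1 _ _

end Collapse

lemma eval_minT_eq_of_collapse_iff {v : ℕ → ℝ} (hv : ∀ i, v i ∈ I01) {α β : Formula}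
    (h : ∀ b, 0 < b → b ≤ 1 → (eval minT (fun i => collapse b (v i)) α = 1 ↔
      eval minT (fun i => collapse b (v i)) β = 1)) :
    eval minT v α = eval minT v β := by
  have hle : ∀ γ δ : Formula, (∀ b, 0 < b → b ≤ 1 → eval minT (fun i => collapse b (v i)) γ = 1 →
      eval minT (fun i => collapse b (v i)) δ = 1) → eval minT v γ ≤ eval minT v δ := by
    intro γ δ hγδ
    by_contra! hlt
    have hγ := eval_mem (T := fullAlg minT) hv γ
    have hδ := eval_mem (T := fullAlg minT) hv δ
    have hpos : 0 < eval minT v γ := hδ.1.trans_lt hlt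
    have hδ1 := hγδ _ hpos hγ.2 (by rw [eval_minT_collapse hpos hγ.2 hv]; exact if_pos le_rfl)
    rw [eval_minT_collapse hpos hγ.2 hv, collapse, if_neg hlt.not_ge] at hδ1
    exact hlt.not_ge (hδ1 ▸ hγ.2)
  exact le_antisymm (hle α β fun b h0 h1 => (h b h0 h1).1) (hle β α fun b h0 h1 => (h b h0 h1).2)

lemma iff_mem_taut_iff_of_idem {t : ContTNorm} {T : TruthAlg t}
    (hidem : ∀ x ∈ T.carrier, t.mul x x = x) (α β : Formula) :
    α.iff β ∈ Taut t T ↔ ∀ v, IsValuation t T v → (eval t v α = 1 ↔ eval t v β = 1) := by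
  rw [iff_mem_taut_iff]
  refine ⟨fun h v hv => by rw [h v hv], fun h v hv => ?_⟩
  rw [eval_eq_eval_minT_of_idem hidem hv, eval_eq_eval_minT_of_idem hidem hv]
  refine eval_minT_eq_of_collapse_iff (fun i => T.subset (hv i)) fun b _ _ => ?_
  have hw : IsValuation t T fun i => collapse b (v i) := fun i => collapse_mem T (hv i)
  rw [← eval_eq_eval_minT_of_idem hidem hw, ← eval_eq_eval_minT_of_idem hidem hw]
  exact h _ hw

/-- Theorem I: a real-valued logic satisfies P1 iff it extends Gödel logic. -/
theorem P1_iff_extends_Godel (t : ContTNorm) (T : TruthAlg t) :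
    P1 (Taut t T) ↔ Taut minT (fullAlg minT) ⊆ Taut t T := by
  constructor
  · intro hP1
    have hidem : Formula.idem ∈ Taut t T := (hP1 t T rfl _ _).2 fun v hv => by
      have hx := T.subset (hv 0)
      exact ((t.mul_eq_one_iff hx hx).trans and_self_iff).symm
    exact taut_minT_subset_of_idem (idem_mem_taut_iff.1 hidem)
  · intro hGodel t' T' hT' α β
    have hidem : Formula.idem ∈ Taut t' T' :=
      hT' ▸ hGodel (idem_mem_taut_iff.2 fun x _ => min_self x)
    rw [← hT']
    exact iff_mem_taut_iff_of_idem (idem_mem_taut_iff.1 hidem) α β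

end
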